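/- Let G be a group satisfying (H1), let B be a nontrivial basal subgroup of G, and let g ∈ G be such that C_G(B^g) = C_G(B). Then B^g = B. (Equivalently, the stabilizer of the class [B] under the conjugation action of G on the structure graph is exactly the normalizer N_G(B).) -/

import Mathlib

variable {G : Type*} [Group G]

/-- The conjugate `B ^ g = g⁻¹ * B * g` of a subgroup `B` by an element `g`. -/
def conjBy (B : Subgroup G) (g : G) : Subgroup G :=
  B.map (MulAut.conj g⁻¹).toMonoidHom

/-- A subgroup is virtually solvable if it has a solvable subgroup of finite index. -/
def VirtSolvable (H : Subgroup G) : Prop :=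
  ∃ M : Subgroup G, M ≤ H ∧ M.relIndex H ≠ 0 ∧ IsSolvable ↥M

/-- A subgroup is virtually nilpotent if it has a nilpotent subgroup of finite index. -/
def VirtNilpotent (H : Subgroup G) : Prop :=
  ∃ M : Subgroup G, M ≤ H ∧ M.relIndex H ≠ 0 ∧ Group.IsNilpotent ↥M

/-- Hypothesis (H1): every virtually solvable subgroup whose normalizer has finite index
(i.e. belonging to `L(G)`) is trivial. -/
def HypH1 (G : Type*) [Group G] : Prop :=
  ∀ H : Subgroup G, (Subgroup.normalizer (H : Set G)).FiniteIndex → VirtSolvable H → H = ⊥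

/-- Hypothesis (H2): every nontrivial normal subgroup of `G` contains the derived subgroup
of some finite-index subgroup of `G`. -/
def HypH2 (G : Type*) [Group G] : Prop :=
  ∀ N : Subgroup G, N.Normal → N ≠ ⊥ →
    ∃ G₀ : Subgroup G, G₀.FiniteIndex ∧ ⁅G₀, G₀⁆ ≤ N

/-- `VA K H` means `K ≤va H`: `K ≤ H` and `K` contains the derived subgroup of some
finite-index subgroup of `H`. -/
def VA (K H : Subgroup G) : Prop :=
  K ≤ H ∧ ∃ A : Subgroup G, A ≤ H ∧ A.relIndex H ≠ 0 ∧ ⁅A, A⁆ ≤ K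

/-- A subgroup `B` is basal if its normalizer has finite index and every conjugate of `B`
either equals `B` or meets `B` trivially. -/
def IsBasal (B : Subgroup G) : Prop :=
  (Subgroup.normalizer (B : Set G)).FiniteIndex ∧ ∀ g : G, conjBy B g = B ∨ conjBy B g ⊓ B = ⊥

/-- The rigid normalizer `R(A)` of a basal subgroup `A`: the intersection of the
normalizers of all basal subgroups meeting `A` trivially. -/
def rigidNormalizer (A : Subgroup G) : Subgroup G :=
  ⨅ B ∈ {B : Subgroup G | IsBasal B ∧ A ⊓ B = ⊥}, Subgroup.normalizer (B : Set G)

/-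
Since `B ^ g ≠ B`, basality gives `B ^ g ⊓ B = ⊥`. Let `N` be the normal core of the normalizer
of `B`: a normal subgroup of finite index normalizing both `B` and `B ^ g`. For `d ∈ B ⊓ N` and
`e ∈ B ^ g ⊓ N` the commutator `⁅d, e⁆` lies in `B ⊓ B ^ g = ⊥`, so `B ^ g ⊓ N` centralizes
`B ⊓ N`. Under (H1) centralizing `B ⊓ N` already forces centralizing `B`, so `B ^ g ⊓ N` lies in
`C(B) = C(B ^ g)`, hence is abelian and, by (H1), trivial. Then `B ^ g` meets a finite-index normal
subgroup trivially, so it is finite, and (H1) makes it trivial, contradicting `B ≠ ⊥`.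
-/

open Subgroup
open scoped commutatorElement

lemma mem_conjBy_iff {B : Subgroup G} {g x : G} : x ∈ conjBy B g ↔ g * x * g⁻¹ ∈ B := by
  constructor
  · rintro ⟨b, hb, rfl⟩
    simpa [mul_assoc] using hb
  · intro h
    exact ⟨g * x * g⁻¹, h, by simp [mul_assoc]⟩

lemma conjBy_eq_bot_iff {B : Subgroup G} {g : G} : conjBy B g = ⊥ ↔ B = ⊥ :=
  map_eq_bot_iff_of_injective B (MulAut.conj g⁻¹).injective

lemma normalizer_conjBy (B : Subgroup G) (g : G) :
    normalizer (conjBy B g : Set G) = conjBy (normalizer (B : Set G)) g :=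
  (map_equiv_normalizer_eq B (MulAut.conj g⁻¹)).symm

instance finiteIndex_conjBy (H : Subgroup G) [H.FiniteIndex] (g : G) :
    (conjBy H g).FiniteIndex :=
  ⟨by
    rw [conjBy, index_map_of_bijective (MulAut.conj g⁻¹).bijective]
    exact FiniteIndex.index_ne_zero⟩

lemma normalCore_le_conjBy (H : Subgroup G) (g : G) : H.normalCore ≤ conjBy H g :=
  fun _ hx => mem_conjBy_iff.mpr (hx g)

lemma normalizer_le_normalizer_centralizer (H : Subgroup G) :
    normalizer (H : Set G) ≤ normalizer (centralizer (H : Set G) : Set G) := by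
  rw [le_normalizer_iff]
  intro x hx c hc
  have := map_centralizer_le_centralizer_image H (MulAut.conj x : G →* G) ⟨c, hc, rfl⟩
  rw [← coe_map, mem_normalizer_iff_map_conj_eq.mp hx] at this
  simpa using this

lemma commute_of_inf_eq_bot {A C : Subgroup G} (hAC : A ⊓ C = ⊥) {a c : G} (ha : a ∈ A)
    (hc : c ∈ C) (haC : a ∈ normalizer (C : Set G)) (hcA : c ∈ normalizer (A : Set G)) :
    Commute a c := by
  suffices ⁅a, c⁆ ∈ A ⊓ C by
    rw [hAC] at this
    exact commutatorElement_eq_one_iff_commute.mp (mem_bot.mp this)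
  rw [commutatorElement_def]
  refine mem_inf.mpr ⟨?_, ?_⟩
  · rw [mul_assoc a, mul_assoc]
    exact mul_mem ha ((mem_normalizer_iff.mp hcA a⁻¹).mp (inv_mem ha))
  · exact mul_mem ((mem_normalizer_iff.mp haC c).mp hc) (inv_mem hc)

lemma finite_of_inf_eq_bot {H K : Subgroup G} [K.Normal] [K.FiniteIndex] (hHK : H ⊓ K = ⊥) :
    Finite H := by
  have hcard : K.relIndex H = Nat.card H := by
    rw [← inf_relIndex_right, inf_comm, hHK, relIndex_bot_left]
  refine Nat.finite_of_card_ne_zero fun h0 => FiniteIndex.index_ne_zero (H := K) ?_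
  simpa [hcard, h0] using relIndex_dvd_index_of_normal K H

lemma virtSolvable_of_finite {H : Subgroup G} [Finite H] : VirtSolvable H :=
  ⟨⊥, bot_le, by rw [relIndex_bot_left]; exact Nat.card_pos.ne',
    (inferInstance : Group.IsSolvable (⊥ : Subgroup G))⟩

lemma virtSolvable_of_commute {H : Subgroup G} (h : ∀ a ∈ H, ∀ b ∈ H, Commute a b) :
    VirtSolvable H :=
  ⟨H, le_rfl, by rw [relIndex_self]; exact one_ne_zero,
    Group.isSolvable_of_comm fun a b => Subtype.ext (h a a.2 b b.2)⟩

namespace HypH1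

lemma eq_bot_of_inf_eq_bot (hH1 : HypH1 G) {H K : Subgroup G}
    [(normalizer (H : Set G)).FiniteIndex] [K.Normal] [K.FiniteIndex] (hHK : H ⊓ K = ⊥) : H = ⊥ :=
  have := finite_of_inf_eq_bot hHK
  hH1 H inferInstance virtSolvable_of_finite

lemma inf_centralizer_eq_bot (hH1 : HypH1 G) (H : Subgroup G)
    [(normalizer (H : Set G)).FiniteIndex] : H ⊓ centralizer (H : Set G) = ⊥ := by
  have : normalizer (H : Set G) ≤
      normalizer ((H ⊓ centralizer (H : Set G) : Subgroup G) : Set G) :=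
    (le_inf le_rfl (normalizer_le_normalizer_centralizer H)).trans inf_normalizer_le_normalizer_inf
  refine hH1 _ (finiteIndex_of_le this) (virtSolvable_of_commute fun a ha b hb => ?_)
  exact mem_centralizer_iff.mp hb.2 a ha.1

/-- `H ⊓ C(H ⊓ K)` meets `K` inside the abelian `(H ⊓ K) ⊓ C(H ⊓ K)`, so (H1) kills it twice;
then `e` commutes with `H` by `commute_of_inf_eq_bot`. -/
lemma mem_centralizer_of_mem_centralizer_inf (hH1 : HypH1 G) {H K : Subgroup G}
    [(normalizer (H : Set G)).FiniteIndex] [K.Normal] [K.FiniteIndex] {e : G}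
    (he : e ∈ centralizer ((H ⊓ K : Subgroup G) : Set G)) (heH : e ∈ normalizer (H : Set G)) :
    e ∈ centralizer (H : Set G) := by
  set D := H ⊓ K
  have hND : normalizer (H : Set G) ≤ normalizer (D : Set G) :=
    (le_inf le_rfl le_normalizer_of_normal).trans inf_normalizer_le_normalizer_inf
  have hNC : normalizer (H : Set G) ≤ normalizer (centralizer (D : Set G) : Set G) :=
    hND.trans (normalizer_le_normalizer_centralizer D)
  have := finiteIndex_of_le hND
  have := finiteIndex_of_le ((le_inf le_rfl hNC).trans inf_normalizer_le_normalizer_inf)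
  have hHC : H ⊓ centralizer (D : Set G) = ⊥ :=
    hH1.eq_bot_of_inf_eq_bot (K := K) (by rw [inf_right_comm, hH1.inf_centralizer_eq_bot D])
  exact mem_centralizer_iff.mpr fun b hb =>
    commute_of_inf_eq_bot hHC hb he (hNC (le_normalizer hb)) heH

end HypH1

theorem statement11 (hH1 : HypH1 G) (B : Subgroup G) (hB : IsBasal B) (hBn : B ≠ ⊥)
    (g : G)
    (hc : Subgroup.centralizer ((conjBy B g : Subgroup G) : Set G) =
      Subgroup.centralizer (B : Set G)) :
    conjBy B g = B := by
  refine (hB.2 g).resolve_right fun hmeet => hBn ?_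
  have := hB.1
  have : (normalizer (conjBy B g : Set G)).FiniteIndex := by
    rw [normalizer_conjBy]; infer_instance
  set N := (normalizer (B : Set G)).normalCore
  have hNB : N ≤ normalizer (B : Set G) := normalCore_le _
  have hNBg : N ≤ normalizer (conjBy B g : Set G) :=
    normalizer_conjBy B g ▸ normalCore_le_conjBy _ g
  have hE_comm : ∀ e ∈ conjBy B g ⊓ N, e ∈ centralizer ((B ⊓ N : Subgroup G) : Set G) :=
    fun e he => mem_centralizer_iff.mpr fun d hd =>
      commute_of_inf_eq_bot (inf_comm B _ ▸ hmeet) hd.1 he.1 (hNBg hd.2) (hNB he.2)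
  have hE_le : conjBy B g ⊓ N ≤ conjBy B g ⊓ centralizer (conjBy B g : Set G) := fun e he =>
    ⟨he.1, hc ▸ hH1.mem_centralizer_of_mem_centralizer_inf (hE_comm e he) (hNB he.2)⟩
  have hE : conjBy B g ⊓ N = ⊥ :=
    le_bot_iff.mp (hE_le.trans (hH1.inf_centralizer_eq_bot _).le)
  exact conjBy_eq_bot_iff.mp (hH1.eq_bot_of_inf_eq_bot hE)
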